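/- arXiv:1310.4418 — 2 statements merged into one kernel-verified Lean document; each statement's English description precedes it below -/
import Mathlib

section
/- The map pack is a monoid morphism from the free monoid of all words with shifted concatenation to the monoid of packed words with shifted concatenation: pack(u * v) = pack(u) * pack(v) for all words u, v. -/
/-- Renaming map for packing: sends letter `i` to the number of distinct
nonzero letters of `w` that are `≤ i` (so `0 ↦ 0`). -/
def packFun (w : List ℕ) (i : ℕ) : ℕ :=
  (w.toFinset.filter (fun j => j ≠ 0 ∧ j ≤ i)).card

/-- The pack operator: order-preserving relabeling of the nonzero letters onto `{1,…,k}`. -/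
def pack (w : List ℕ) : List ℕ := w.map (packFun w)

/-- `wsup w` is the maximum letter of `w` (`0` for the empty word). -/
def wsup (w : List ℕ) : ℕ := w.foldr max 0

/-- `shiftT t w` replaces each nonzero letter `n` of `w` by `n + t`, fixing `0`. -/
def shiftT (t : ℕ) (w : List ℕ) : List ℕ := w.map fun n => if n = 0 then 0 else n + t

/-- Shifted concatenation `u * v = u · T_{sup u}(v)`. -/
def sconcat (u v : List ℕ) : List ℕ := u ++ shiftT (wsup u) v

/-!
Write `s = sup u`. The nonzero letters of `u * v` are those of `u`, all `≤ s`, together with the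
letters `n + s` for the nonzero letters `n` of `v`, all `> s`. Counting the distinct nonzero
letters `≤ i` therefore splits as
`packFun (u * v) i = packFun u (min i s) + packFun v (i - s)`,
so `pack (u * v)` renames the letters of `u` as `pack u` does and sends `n + s` to
`packFun v n + packFun u s`, which is `T_{sup (pack u)}` applied to the letter of `pack v`.
-/

def shiftLetter (t n : ℕ) : ℕ := if n = 0 then 0 else n + t

lemma shiftT_eq_map (t : ℕ) (w : List ℕ) : shiftT t w = w.map (shiftLetter t) := rfl

lemma shiftLetter_zero (t : ℕ) : shiftLetter t 0 = 0 := rfl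

lemma shiftLetter_of_ne_zero (t : ℕ) {n : ℕ} (hn : n ≠ 0) : shiftLetter t n = n + t := if_neg hn

lemma shiftLetter_injective (t : ℕ) : Function.Injective (shiftLetter t) := by
  intro a b h
  unfold shiftLetter at h
  split_ifs at h <;> omega

lemma packFun_mono (w : List ℕ) : Monotone (packFun w) := fun _ _ hab =>
  Finset.card_le_card <| Finset.monotone_filter_right _ fun _ _ ⟨h0, hle⟩ => ⟨h0, hle.trans hab⟩

lemma packFun_zero (w : List ℕ) : packFun w 0 = 0 := by
  simp [packFun]

lemma packFun_ne_zero {w : List ℕ} {x : ℕ} (hx : x ≠ 0) (hxw : x ∈ w) : packFun w x ≠ 0 :=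
  Finset.card_ne_zero_of_mem (Finset.mem_filter.mpr ⟨List.mem_toFinset.mpr hxw, hx, le_rfl⟩)

lemma le_wsup_of_mem {w : List ℕ} {x : ℕ} (h : x ∈ w) : x ≤ wsup w := by
  induction w with
  | nil => cases h
  | cons a l ih =>
    rcases List.mem_cons.mp h with rfl | h
    · exact le_max_left _ _
    · exact (ih h).trans (le_max_right _ _)

lemma wsup_map_of_monotone {f : ℕ → ℕ} (hf : Monotone f) (h0 : f 0 = 0) (w : List ℕ) :
    wsup (w.map f) = f (wsup w) := by
  induction w with
  | nil => simp [wsup, h0]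
  | cons a l ih =>
    simp only [wsup, List.map_cons, List.foldr_cons] at ih ⊢
    rw [ih, hf.map_max]

lemma wsup_pack (w : List ℕ) : wsup (pack w) = packFun w (wsup w) :=
  wsup_map_of_monotone (packFun_mono w) (packFun_zero w) w

lemma packFun_sconcat (u v : List ℕ) (i : ℕ) :
    packFun (sconcat u v) i = packFun u (min i (wsup u)) + packFun v (i - wsup u) := by
  have hsplit : (sconcat u v).toFinset = u.toFinset ∪ v.toFinset.image (shiftLetter (wsup u)) := by
    ext; simp [sconcat, shiftT_eq_map]
  set s := wsup u
  have hleft : u.toFinset.filter (fun j => j ≠ 0 ∧ j ≤ i) =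
      u.toFinset.filter (fun j => j ≠ 0 ∧ j ≤ min i s) :=
    Finset.filter_congr fun j hj => by
      have : j ≤ s := le_wsup_of_mem (List.mem_toFinset.mp hj)
      simp only [le_min_iff, this, and_true]
  have hright : (v.toFinset.image (shiftLetter s)).filter (fun j => j ≠ 0 ∧ j ≤ i) =
      (v.toFinset.filter (fun n => n ≠ 0 ∧ n ≤ i - s)).image (shiftLetter s) := by
    rw [Finset.filter_image]
    congr 1
    refine Finset.filter_congr fun n _ => ?_
    unfold shiftLetter
    split_ifs <;> omega
  unfold packFun
  rw [hsplit, Finset.filter_union, Finset.card_union_of_disjoint, hleft, hright,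
    Finset.card_image_of_injective _ (shiftLetter_injective s)]
  refine Finset.disjoint_left.mpr fun a ha ha' => ?_
  obtain ⟨hau, -⟩ := Finset.mem_filter.mp ha
  obtain ⟨ha'img, ha0, -⟩ := Finset.mem_filter.mp ha'
  obtain ⟨n, -, rfl⟩ := Finset.mem_image.mp ha'img
  have hn : n ≠ 0 := by rintro rfl; exact ha0 (shiftLetter_zero s)
  have := le_wsup_of_mem (List.mem_toFinset.mp hau)
  rw [shiftLetter_of_ne_zero s hn] at this
  omega

lemma packFun_sconcat_of_mem_left {u : List ℕ} (v : List ℕ) {x : ℕ} (hx : x ∈ u) :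
    packFun (sconcat u v) x = packFun u x := by
  have hxs := le_wsup_of_mem hx
  rw [packFun_sconcat, min_eq_left hxs, Nat.sub_eq_zero_of_le hxs, packFun_zero, add_zero]

lemma packFun_sconcat_shiftLetter (u : List ℕ) {v : List ℕ} {x : ℕ} (hx : x ∈ v) :
    packFun (sconcat u v) (shiftLetter (wsup u) x) =
      shiftLetter (packFun u (wsup u)) (packFun v x) := by
  by_cases hx0 : x = 0
  · rw [hx0, shiftLetter_zero, packFun_zero, packFun_zero, shiftLetter_zero]
  · rw [shiftLetter_of_ne_zero _ hx0, shiftLetter_of_ne_zero _ (packFun_ne_zero hx0 hx),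
      packFun_sconcat, min_eq_right (by omega), Nat.add_sub_cancel, add_comm]

/-- `pack` is a morphism of monoids for the shifted concatenation. -/
theorem pack_sconcat (u v : List ℕ) :
    pack (sconcat u v) = sconcat (pack u) (pack v) := by
  rw [sconcat, sconcat, wsup_pack, pack, List.map_append]
  congr 1
  · exact List.map_congr_left fun x hx => packFun_sconcat_of_mem_left v hx
  · rw [shiftT_eq_map, shiftT_eq_map, pack, List.map_map, List.map_map]
    exact List.map_congr_left fun x hx => packFun_sconcat_shiftLetter u hx
end

section
/- The number d(n,k) of packed words of length n with maximum letter k satisfies d(n,k) = S(n,k)·k! + S(n,k+1)·(k+1)! = S(n+1,k+1)·k!, where S denotes Stirling numbers of the second kind. -/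
/-- Stirling numbers of the second kind. -/
def stirling2 : ℕ → ℕ → ℕ
  | 0, 0 => 1
  | 0, _ + 1 => 0
  | _ + 1, 0 => 0
  | n + 1, k + 1 => stirling2 n k + (k + 1) * stirling2 n (k + 1)

/-! A packed word of length `n` with supremum `k` is a word over `{0,…,k}` in which each of
`1,…,k` occurs; according to whether `0` occurs too, it uses all of `{0,…,k}` or all of
`{1,…,k}`. Words of length `n` using every letter of an `m`-letter alphabet number `S(n,m)·m!`:
after the first letter `a`, the rest must use every letter except possibly `a`, and splitting
again on whether `a` occurs gives `m·(S(n,m)·m! + S(n,m-1)·(m-1)!)`, the Stirling recursion. -/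

open Finset

lemma wsup_eq_sup_toFinset (w : List ℕ) : wsup w = w.toFinset.sup id :=
  List.foldr_sup_eq_sup_toFinset w

lemma packFun_eq_card_inter (w : List ℕ) (i : ℕ) :
    packFun w i = #(w.toFinset ∩ Icc 1 i) := by
  rw [packFun]
  congr 1
  ext j
  simp only [mem_filter, mem_inter, mem_Icc, Nat.one_le_iff_ne_zero]

lemma le_wsup {w : List ℕ} {x : ℕ} (hx : x ∈ w) : x ≤ wsup w := by
  rw [wsup_eq_sup_toFinset]
  exact le_sup (f := id) (List.mem_toFinset.2 hx)

lemma wsup_mem {w : List ℕ} (h : wsup w ≠ 0) : wsup w ∈ w := by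
  rw [wsup_eq_sup_toFinset] at h ⊢
  have hne : w.toFinset.Nonempty := nonempty_iff_ne_empty.2 fun he => h (by simp [he])
  obtain ⟨x, hx, hsup⟩ := exists_mem_eq_sup _ hne id
  exact hsup ▸ List.mem_toFinset.1 hx

lemma pack_eq_self_iff {w : List ℕ} : pack w = w ↔ Icc 1 (wsup w) ⊆ w.toFinset := by
  have hfix : pack w = w ↔ ∀ x ∈ w, packFun w x = x := by
    simpa [pack] using List.map_inj_left (l := w) (f := packFun w) (g := id)
  rw [hfix]
  constructor
  · intro h
    rcases eq_or_ne (wsup w) 0 with h0 | h0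
    · simp [h0]
    · have hcard : #(w.toFinset ∩ Icc 1 (wsup w)) = #(Icc 1 (wsup w)) := by
        rw [← packFun_eq_card_inter, h _ (wsup_mem h0), Nat.card_Icc, Nat.add_sub_cancel]
      exact inter_eq_right.1 (eq_of_subset_of_card_le inter_subset_right hcard.ge)
  · intro h x hx
    rw [packFun_eq_card_inter, inter_eq_right.2 ((Icc_subset_Icc_right (le_wsup hx)).trans h),
      Nat.card_Icc, Nat.add_sub_cancel]

lemma sup_id_eq_and_Icc_subset_iff {s : Finset ℕ} {k : ℕ} :
    s.sup id = k ∧ Icc 1 k ⊆ s ↔ s ⊆ range (k + 1) ∧ (range (k + 1)).erase 0 ⊆ s := by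
  have hIcc : (range (k + 1)).erase 0 = Icc 1 k := by
    ext j
    simp only [mem_erase, mem_range, mem_Icc]
    omega
  rw [hIcc]
  constructor
  · rintro ⟨rfl, h⟩
    exact ⟨fun x hx => mem_range_succ_iff.2 (le_sup (f := id) hx), h⟩
  · rintro ⟨hs, h⟩
    refine ⟨le_antisymm (Finset.sup_le fun x hx => mem_range_succ_iff.1 (hs hx)) ?_, h⟩
    rcases Nat.eq_zero_or_pos k with rfl | hk
    · exact Nat.zero_le _
    · exact le_sup (f := id) (h (mem_Icc.2 ⟨hk, le_rfl⟩))

section Words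

variable {α : Type*} [DecidableEq α]

def wordsOfLength (A : Finset α) : ℕ → Finset (List α)
  | 0 => {[]}
  | n + 1 => (A ×ˢ wordsOfLength A n).image fun p => p.1 :: p.2

lemma mem_wordsOfLength {A : Finset α} {n : ℕ} {w : List α} :
    w ∈ wordsOfLength A n ↔ w.length = n ∧ w.toFinset ⊆ A := by
  induction n generalizing w with
  | zero => cases w <;> simp [wordsOfLength]
  | succ n ih =>
    cases w with
    | nil => simp [wordsOfLength]
    | cons a w => simp [wordsOfLength, ih, insert_subset_iff, and_comm, and_assoc]

def coveringWords (A J : Finset α) (n : ℕ) : Finset (List α) :=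
  (wordsOfLength A n).filter (J ⊆ ·.toFinset)

lemma mem_coveringWords {A J : Finset α} {n : ℕ} {w : List α} :
    w ∈ coveringWords A J n ↔ w.length = n ∧ w.toFinset ⊆ A ∧ J ⊆ w.toFinset := by
  simp [coveringWords, mem_wordsOfLength, and_assoc]

lemma card_coveringWords_succ (A J : Finset α) (n : ℕ) :
    #(coveringWords A J (n + 1)) = ∑ a ∈ A, #(coveringWords A (J.erase a) n) := by
  have hcons : Function.Injective fun p : α × List α => p.1 :: p.2 := fun p q h => by
    simpa [Prod.ext_iff] using h
  simp only [coveringWords, wordsOfLength, filter_image, card_image_of_injective _ hcons,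
    card_filter, sum_product, List.toFinset_cons, subset_insert_iff]

lemma card_coveringWords_erase {A : Finset α} {a : α} (ha : a ∈ A) (n : ℕ) :
    #(coveringWords A (A.erase a) n)
      = #(coveringWords A A n) + #(coveringWords (A.erase a) (A.erase a) n) := by
  rw [← card_filter_add_card_filter_not (fun w => a ∈ w.toFinset)]
  congr 2 <;> ext w <;> simp only [mem_filter, mem_coveringWords]
  · have hA : A ⊆ w.toFinset ↔ a ∈ w.toFinset ∧ A.erase a ⊆ w.toFinset := by
      conv_lhs => rw [← insert_erase ha]
      exact insert_subset_iff
    tauto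
  · rw [subset_erase]
    tauto

lemma card_coveringWords_self (A : Finset α) (n : ℕ) :
    #(coveringWords A A n) = stirling2 n #A * (#A).factorial := by
  induction n generalizing A with
  | zero =>
    rcases A.eq_empty_or_nonempty with rfl | ⟨a, ha⟩
    · rfl
    · obtain ⟨m, hm⟩ := Nat.exists_eq_succ_of_ne_zero (card_ne_zero.2 ⟨a, ha⟩)
      rw [hm, stirling2, zero_mul, card_eq_zero, eq_empty_iff_forall_notMem]
      intro w hw
      obtain ⟨hlen, -, hA⟩ := mem_coveringWords.1 hw
      simpa [List.length_eq_zero_iff.1 hlen] using hA ha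
  | succ n ih =>
    calc #(coveringWords A A (n + 1))
        = ∑ a ∈ A, (stirling2 n #A * (#A).factorial
            + stirling2 n (#A - 1) * (#A - 1).factorial) := by
          rw [card_coveringWords_succ]
          refine sum_congr rfl fun a ha => ?_
          rw [card_coveringWords_erase ha, ih, ih, card_erase_of_mem ha]
      _ = stirling2 (n + 1) #A * (#A).factorial := by
          rw [sum_const, smul_eq_mul]
          rcases #A with _ | m
          · rw [zero_mul, stirling2, zero_mul]
          · rw [Nat.add_sub_cancel, stirling2, Nat.factorial_succ]
            ring

end Words

/-- The number `d(n,k)` of packed words of length `n` with supremum `k` equals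
`S(n,k)·k! + S(n,k+1)·(k+1)! = S(n+1,k+1)·k!`. -/
theorem card_packed_sup (n k : ℕ) :
    {w : List ℕ | pack w = w ∧ w.length = n ∧ wsup w = k}.ncard
        = stirling2 n k * k.factorial + stirling2 n (k + 1) * (k + 1).factorial ∧
    {w : List ℕ | pack w = w ∧ w.length = n ∧ wsup w = k}.ncard
        = stirling2 (n + 1) (k + 1) * k.factorial := by
  have hset : {w : List ℕ | pack w = w ∧ w.length = n ∧ wsup w = k}
      = coveringWords (range (k + 1)) ((range (k + 1)).erase 0) n := by
    ext w
    rw [Set.mem_ofPred_eq, mem_coe, mem_coveringWords, ← sup_id_eq_and_Icc_subset_iff,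
      pack_eq_self_iff, wsup_eq_sup_toFinset]
    grind
  have hcard : {w : List ℕ | pack w = w ∧ w.length = n ∧ wsup w = k}.ncard
      = stirling2 n k * k.factorial + stirling2 n (k + 1) * (k + 1).factorial := by
    rw [hset, Set.ncard_coe_finset, card_coveringWords_erase (by simp), card_coveringWords_self,
      card_coveringWords_self, card_erase_of_mem (by simp), card_range, Nat.add_sub_cancel,
      add_comm]
  refine ⟨hcard, hcard.trans ?_⟩
  rw [stirling2, Nat.factorial_succ]
  ring
end
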